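/- Let A be a pointed pseudocompact k-algebra with A/J²(A) finite dimensional, and let α : A → A be a continuous unital algebra endomorphism such that (α − id_A)(A) ⊆ J(A) and (α − id_A)(J(A)) ⊆ J²(A). Then α is an isomorphism. -/

import Mathlib

/-! Throughout, `k` is a perfect field regarded as a discrete topological ring.

A *pseudocompact* `k`-algebra is an associative unital Hausdorff topological `k`-algebra
which has a basis of neighbourhoods of `0` consisting of open two-sided ideals of finite
codimension intersecting in `0`, and which is the inverse limit of its quotients by these
ideals; equivalently (as encoded below) it is a complete Hausdorff topological algebra with
such a basis of open ideals. -/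

/-- The Jacobson radical of a topological algebra: the intersection of the open maximal
left ideals. -/
def openJacobson (A : Type) [Ring A] [TopologicalSpace A] : Ideal A :=
  sInf {I : Ideal A | IsOpen (I : Set A) ∧ I.IsMaximal}

/-- The Jacobson radical `J(A)`, viewed as a `k`-submodule of `A`. -/
def Jrad (k : Type) [Field k] (A : Type) [Ring A] [Algebra k A] [TopologicalSpace A] :
    Submodule k A := (openJacobson A).restrictScalars k

/-- Powers of the radical: `J⁰(A) = A`, `J¹(A) = J(A)`, `Jⁿ(A) = J(A)·Jⁿ⁻¹(A)` for `n > 1`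
(the product of two `k`-submodules being spanned by the products of their elements). -/
def Jpow (k : Type) [Field k] (A : Type) [Ring A] [Algebra k A] [TopologicalSpace A] :
    ℕ → Submodule k A
  | 0 => ⊤
  | 1 => Jrad k A
  | n + 2 => Jrad k A * Jpow k A (n + 1)

/-- `A` is a pseudocompact `k`-algebra: Hausdorff, complete, with a basis of neighbourhoods
of `0` consisting of open two-sided ideals of finite codimension over `k`.  (Hausdorffness is
equivalent to the requirement that these open ideals intersect in `0`, and completeness to
`A` being the inverse limit of its quotients by them.) -/
structure IsPseudocompactAlgebra (k : Type) [Field k] (A : Type) [Ring A] [Algebra k A]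
    [UniformSpace A] [IsUniformAddGroup A] [IsTopologicalRing A] : Prop where
  t2 : T2Space A
  complete : CompleteSpace A
  basis : ∀ s ∈ nhds (0 : A), ∃ I : Ideal A,
    (∀ x ∈ I, ∀ b : A, x * b ∈ I) ∧ IsOpen (I : Set A) ∧
    FiniteDimensional k (A ⧸ I.restrictScalars k) ∧ (I : Set A) ⊆ s

/-- `V` is a pseudocompact `A`-module: Hausdorff, complete, with a basis of neighbourhoods
of `0` consisting of open submodules of finite codimension over `k`. -/
structure IsPseudocompactModule (k : Type) [Field k] (A : Type) [Ring A] [Algebra k A]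
    (V : Type) [AddCommGroup V] [Module k V] [Module A V] [IsScalarTower k A V]
    [UniformSpace V] [IsUniformAddGroup V] : Prop where
  t2 : T2Space V
  complete : CompleteSpace V
  basis : ∀ s ∈ nhds (0 : V), ∃ p : Submodule A V,
    IsOpen (p : Set V) ∧ FiniteDimensional k (V ⧸ p.restrictScalars k) ∧ (p : Set V) ⊆ s

/-- A pseudocompact algebra `A` is *pointed* if `A/J(A)` is isomorphic to a finite product of
copies of `k`; equivalently, there is a surjective `k`-algebra homomorphism `A → kⁿ`
whose kernel is `J(A)`. -/
def IsPointed (k : Type) [Field k] (A : Type) [Ring A] [Algebra k A] [TopologicalSpace A] :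
    Prop :=
  ∃ (n : ℕ) (φ : A →ₐ[k] (Fin n → k)), Function.Surjective φ ∧ RingHom.ker φ = openJacobson A

/-! Write `α = 1 - ε`. The hypotheses say that `ε` raises the `J`-adic filtration by one,
`ε(Jⁿ) ⊆ Jⁿ⁺¹`, and in a pseudocompact algebra the powers `Jⁿ` form a basis of neighbourhoods
of `0`: every open left ideal `I` of finite codimension contains some `Jⁿ`, because `J` kills
each simple subquotient of the finite-length module `A/I`. Hence the Neumann series `∑ εᵐ`
converges, uniformly on `A`, to a continuous two-sided inverse of `α`. -/

open Filter Topology Function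

theorem AddMonoid.End.pow_apply_mem_of_forall_mem_succ {G : Type*} [AddCommGroup G]
    {F : ℕ → AddSubgroup G} (hF_top : F 0 = ⊤) {ε : AddMonoid.End G}
    (hε : ∀ n, ∀ x ∈ F n, ε x ∈ F (n + 1)) (m : ℕ) (x : G) : (ε ^ m) x ∈ F m := by
  induction m with
  | zero => simp [hF_top]
  | succ m ih => simpa [pow_succ'] using hε m _ ih

section FilteredGroup

variable {G : Type*} [AddCommGroup G] [UniformSpace G] [IsUniformAddGroup G]
  {F : ℕ → AddSubgroup G}

theorem summable_of_mem_of_antitone [CompleteSpace G] (hF : Antitone F)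
    (hF_nhds : ∀ s ∈ 𝓝 (0 : G), ∃ n, (F n : Set G) ⊆ s) {u : ℕ → G}
    (hu : ∀ n, u n ∈ F n) : Summable u := by
  refine summable_iff_vanishing.2 fun e he => ?_
  obtain ⟨n, hn⟩ := hF_nhds e he
  refine ⟨Finset.range n, fun t ht => hn (sum_mem fun m hm => hF ?_ (hu m))⟩
  simpa using Finset.disjoint_left.1 ht hm

theorem HasSum.sub_sum_range_mem_topologicalClosure {H : AddSubgroup G} {u : ℕ → G} {a : G}
    (h : HasSum u a) {n : ℕ} (hu : ∀ m ≥ n, u m ∈ H) :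
    a - ∑ i ∈ Finset.range n, u i ∈ H.topologicalClosure :=
  H.isClosed_topologicalClosure.mem_of_tendsto ((hasSum_nat_add_iff' n).2 h) <|
    Eventually.of_forall fun _ => H.le_topologicalClosure <|
      sum_mem fun i _ => hu _ (Nat.le_add_left n i)

theorem tendstoUniformly_sum_range_of_mem_of_antitone {X : Type*} (hF : Antitone F)
    (hF_nhds : ∀ s ∈ 𝓝 (0 : G), ∃ n, (F n : Set G) ⊆ s) {u : ℕ → X → G} {g : X → G}
    (hu : ∀ m x, u m x ∈ F m) (hg : ∀ x, HasSum (u · x) (g x)) :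
    TendstoUniformly (fun n x => ∑ m ∈ Finset.range n, u m x) g atTop := by
  intro V hV
  rw [uniformity_eq_comap_nhds_zero G] at hV
  obtain ⟨t, ht, htV⟩ := mem_comap.1 hV
  obtain ⟨c, hc, hc_closed, hct⟩ := exists_mem_nhds_isClosed_subset (neg_mem_nhds_zero G ht)
  obtain ⟨N, hN⟩ := hF_nhds c hc
  filter_upwards [eventually_ge_atTop N] with n hn x
  have htail := (hg x).sub_sum_range_mem_topologicalClosure fun m hm => hF (hn.trans hm) (hu m x)
  have hclosure : ((F N).topologicalClosure : Set G) ⊆ c := closure_minimal hN hc_closed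
  exact htV (by simpa using Set.mem_neg.1 (hct (hclosure htail)))

theorem exists_continuous_inverse_of_sub_mem_succ [T2Space G] [CompleteSpace G]
    (hF : Antitone F) (hF_top : F 0 = ⊤) (hF_nhds : ∀ s ∈ 𝓝 (0 : G), ∃ n, (F n : Set G) ⊆ s)
    (f : AddMonoid.End G) (hf : Continuous f) (hfF : ∀ n, ∀ x ∈ F n, f x - x ∈ F (n + 1)) :
    ∃ g : G → G, Continuous g ∧ LeftInverse g f ∧ RightInverse g f := by
  set ε : AddMonoid.End G := 1 - f
  have hε_apply (x : G) : ε x = x - f x := rfl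
  have hεc : Continuous ε := continuous_id.sub hf
  have hε_mem : ∀ m x, (ε ^ m) x ∈ F m :=
    AddMonoid.End.pow_apply_mem_of_forall_mem_succ hF_top fun n x hx => by
      simpa [hε_apply] using neg_mem (hfF n x hx)
  set g : G → G := fun x => ∑' m, (ε ^ m) x
  have hg (x : G) : HasSum (fun m => (ε ^ m) x) (g x) :=
    (summable_of_mem_of_antitone hF hF_nhds (hε_mem · x)).hasSum
  have hg_succ (x : G) : HasSum (fun m => (ε ^ (m + 1)) x) (g x - x) := by
    simpa using (hasSum_nat_add_iff' 1).2 (hg x)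
  refine ⟨g, ?_, fun x => ?_, fun x => ?_⟩
  · refine (tendstoUniformly_sum_range_of_mem_of_antitone hF hF_nhds hε_mem hg).continuous
      (Frequently.of_forall fun n => continuous_finsetSum _ fun m _ => ?_)
    simpa using hεc.iterate m
  · have hfx : f x = x - ε x := by rw [hε_apply, sub_sub_cancel]
    refine HasSum.tsum_eq ?_
    convert (hg x).sub (hg_succ x) using 1
    · funext m
      rw [hfx, map_sub, pow_succ]
      rfl
    · rw [sub_sub_cancel]
  · have hεg : ε (g x) = g x - x := by
      refine ((hg x).map ε hεc).unique ?_
      convert hg_succ x using 1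
      funext m
      rw [pow_succ']
      rfl
    calc f (g x) = g x - ε (g x) := by rw [hε_apply, sub_sub_cancel]
      _ = x := by rw [hεg, sub_sub_cancel]

end FilteredGroup

section Radical

theorem openJacobson_le {A : Type} [Ring A] [TopologicalSpace A] {L : Ideal A}
    (hL : IsOpen (L : Set A)) (hmax : L.IsMaximal) : openJacobson A ≤ L :=
  sInf_le ⟨hL, hmax⟩

theorem smul_mem_of_covBy {A : Type} [Ring A] [TopologicalSpace A] [ContinuousAdd A]
    {M : Type*} [AddCommGroup M] [Module A M]
    (hann : ∀ m : M, IsOpen ((LinearMap.toSpanSingleton A M m).ker : Set A))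
    {N P : Submodule A M} (hNP : N ⋖ P) {x : A} (hx : x ∈ openJacobson A) {p : M} (hp : p ∈ P) :
    x • p ∈ N := by
  by_cases hpN : p ∈ N
  · exact N.smul_mem x hpN
  have := (covBy_iff_quot_is_simple hNP.le).1 hNP
  -- `y ↦ y • p` maps `A` onto the simple module `P / N`; its kernel is an open maximal ideal
  let φ : A →ₗ[A] P ⧸ N.comap P.subtype :=
    (N.comap P.subtype).mkQ ∘ₗ LinearMap.toSpanSingleton A P ⟨p, hp⟩
  have hφ (y : A) : y ∈ LinearMap.ker φ ↔ y • p ∈ N := by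
    simp [φ, Submodule.Quotient.mk_eq_zero]
  have hφ_surj : Function.Surjective φ := by
    refine LinearMap.range_eq_top.1 ((eq_bot_or_eq_top (LinearMap.range φ)).resolve_left ?_)
    intro h
    have h1 : (1 : A) ∈ LinearMap.ker φ := by simp [LinearMap.range_eq_bot.1 h]
    exact hpN (by simpa using (hφ 1).1 h1)
  have hmax : Ideal.IsMaximal (LinearMap.ker φ) := by
    rw [Ideal.isMaximal_def, ← isSimpleModule_iff_isCoatom]
    exact IsSimpleModule.congr (φ.quotKerEquivOfSurjective hφ_surj)
  have hopen : IsOpen (LinearMap.ker φ : Set A) :=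
    AddSubgroup.isOpen_mono (H₁ := (LinearMap.toSpanSingleton A M p).ker.toAddSubgroup)
      (H₂ := (LinearMap.ker φ).toAddSubgroup)
      (fun y hy => (hφ y).2 (by rw [show y • p = 0 from hy]; exact N.zero_mem)) (hann p)
  exact (hφ x).1 (openJacobson_le hopen hmax hx)

variable {k : Type} [Field k] {A : Type} [Ring A] [Algebra k A] [TopologicalSpace A]

theorem Jpow_succ_le : ∀ n, Jpow k A (n + 1) ≤ Jpow k A n
  | 0 => le_top
  | 1 => Submodule.mul_le.2 fun x _ _ hy => (openJacobson A).mul_mem_left x hy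
  | n + 2 => mul_le_mul_right (Jpow_succ_le (n + 1)) _

theorem Jpow_antitone : Antitone (Jpow k A) :=
  antitone_nat_of_succ_le Jpow_succ_le

theorem exists_Jpow_smul_eq_zero [ContinuousAdd A] {M : Type*} [AddCommGroup M] [Module A M]
    [IsArtinian A M] [IsNoetherian A M]
    (hann : ∀ m : M, IsOpen ((LinearMap.toSpanSingleton A M m).ker : Set A)) :
    ∃ n, ∀ x ∈ Jpow k A n, ∀ m : M, x • m = 0 := by
  suffices h : ∀ N : Submodule A M, ∃ n, ∀ x ∈ Jpow k A (n + 1), ∀ m : M, x • m ∈ N by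
    obtain ⟨n, hn⟩ := h ⊥
    exact ⟨n + 1, fun x hx m => (Submodule.mem_bot A).1 (hn x hx m)⟩
  intro N
  induction N using WellFoundedGT.induction with
  | _ N ih =>
    obtain rfl | hN := eq_or_lt_of_le (le_top : N ≤ ⊤)
    · exact ⟨0, fun _ _ _ => Submodule.mem_top⟩
    obtain ⟨P, hNP, -⟩ := exists_covBy_le_of_lt hN
    obtain ⟨n, hn⟩ := ih P hNP.lt
    refine ⟨n + 1, fun x hx m => ?_⟩
    refine Submodule.mul_induction_on hx (fun j hj y hy => ?_) (fun y z hy hz => ?_)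
    · rw [mul_smul]
      exact smul_mem_of_covBy hann hNP hj (hn y hy m)
    · rw [add_smul]
      exact N.add_mem hy hz

theorem exists_Jpow_le_of_isOpen [IsTopologicalRing A] {I : Ideal A} (hI : IsOpen (I : Set A))
    [FiniteDimensional k (A ⧸ I.restrictScalars k)] : ∃ n, Jpow k A n ≤ I.restrictScalars k := by
  have : FiniteDimensional k (A ⧸ I) :=
    (Submodule.Quotient.restrictScalarsEquiv k I).finiteDimensional
  have : IsArtinian A (A ⧸ I) := isArtinian_of_tower k inferInstance
  have : IsNoetherian A (A ⧸ I) := isNoetherian_of_tower k inferInstance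
  have hann (m : A ⧸ I) : IsOpen ((LinearMap.toSpanSingleton A _ m).ker : Set A) := by
    induction m using Submodule.Quotient.induction_on with
    | H a =>
      convert hI.preimage (continuous_mul_const a) using 1
      ext y
      simp [← Submodule.Quotient.mk_smul, Submodule.Quotient.mk_eq_zero]
  obtain ⟨n, hn⟩ := exists_Jpow_smul_eq_zero (k := k) hann
  refine ⟨n, fun x hx => ?_⟩
  simpa [← Submodule.Quotient.mk_smul, Submodule.Quotient.mk_eq_zero] using
    hn x hx (Submodule.Quotient.mk 1)

theorem sub_mem_Jpow_succ {F : Type*} [FunLike F A A] [RingHomClass F A A] {α : F}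
    (h0 : ∀ a, α a - a ∈ Jrad k A) (h1 : ∀ a ∈ Jrad k A, α a - a ∈ Jpow k A 2) :
    ∀ n, ∀ x ∈ Jpow k A n, α x - x ∈ Jpow k A (n + 1)
  | 0, x, _ => h0 x
  | 1, x, hx => h1 x hx
  | n + 2, x, hx => by
    have ih := sub_mem_Jpow_succ h0 h1 (n + 1)
    refine Submodule.mul_induction_on hx (fun j hj y hy => ?_) (fun y z hy hz => ?_)
    · have hαy : α y ∈ Jpow k A (n + 1) := by
        simpa using add_mem hy (Jpow_succ_le _ (ih y hy))
      have hj' : (α j - j) * α y ∈ Jrad k A * Jrad k A * Jpow k A (n + 1) :=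
        Submodule.mul_mem_mul (h1 j hj) hαy
      rw [show α (j * y) - j * y = j * (α y - y) + (α j - j) * α y by rw [map_mul]; noncomm_ring]
      rw [mul_assoc] at hj'
      exact add_mem (Submodule.mul_mem_mul hj (ih y hy)) hj'
    · rw [map_add, add_sub_add_comm]
      exact add_mem hy hz

end Radical

theorem IsPseudocompactAlgebra.exists_Jpow_subset {k : Type} [Field k] {A : Type} [Ring A]
    [Algebra k A] [UniformSpace A] [IsUniformAddGroup A] [IsTopologicalRing A]
    (hA : IsPseudocompactAlgebra k A) {s : Set A} (hs : s ∈ 𝓝 0) :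
    ∃ n, (Jpow k A n : Set A) ⊆ s := by
  obtain ⟨I, -, hI, hfin, hIs⟩ := hA.basis s hs
  obtain ⟨n, hn⟩ := exists_Jpow_le_of_isOpen (k := k) hI
  exact ⟨n, fun x hx => hIs (hn hx)⟩

theorem close_to_id_is_isomorphism_general
    (k : Type) [Field k]
    (A : Type) [Ring A] [Algebra k A] [UniformSpace A] [IsUniformAddGroup A] [IsTopologicalRing A]
    (hA : IsPseudocompactAlgebra k A)
    (α : A →ₐ[k] A) (hαc : Continuous α)
    (h0 : ∀ a : A, α a - a ∈ Jrad k A)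
    (h1 : ∀ a ∈ Jrad k A, α a - a ∈ Jpow k A 2) :
    ∃ β : A →ₐ[k] A, Continuous β ∧
      β.comp α = AlgHom.id k A ∧ α.comp β = AlgHom.id k A := by
  have := hA.t2
  have := hA.complete
  obtain ⟨g, hg, hgα, hαg⟩ := exists_continuous_inverse_of_sub_mem_succ
    (F := fun n => (Jpow k A n).toAddSubgroup) (fun _ _ h => Jpow_antitone h) rfl
    (fun _ hs => hA.exists_Jpow_subset hs) (α : A →+ A) hαc (sub_mem_Jpow_succ (α := α) h0 h1)
  let e := AlgEquiv.ofBijective α ⟨hgα.injective, hαg.surjective⟩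
  have he : ⇑e.symm = g := funext fun b => e.symm_apply_eq.2 (hαg b).symm
  exact ⟨e.symm, he ▸ hg, AlgHom.ext e.symm_apply_apply, AlgHom.ext e.apply_symm_apply⟩

/-- Let `A` be a pointed pseudocompact `k`-algebra with `A/J²(A)` finite
dimensional and `α : A → A` a continuous unital algebra endomorphism with
`(α − id)(A) ⊆ J(A)` and `(α − id)(J(A)) ⊆ J²(A)`.  Then `α` is an isomorphism (in the
category of pseudocompact algebras with continuous homomorphisms: it has a continuous
two-sided inverse). -/
theorem close_to_id_is_isomorphism
    (k : Type) [Field k] [PerfectField k]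
    (A : Type) [Ring A] [Algebra k A] [UniformSpace A] [IsUniformAddGroup A] [IsTopologicalRing A]
    (hA : IsPseudocompactAlgebra k A) (hAp : IsPointed k A)
    (hfd : FiniteDimensional k (A ⧸ Jpow k A 2))
    (α : A →ₐ[k] A) (hαc : Continuous α)
    (h0 : ∀ a : A, α a - a ∈ Jrad k A)
    (h1 : ∀ a ∈ Jrad k A, α a - a ∈ Jpow k A 2) :
    ∃ β : A →ₐ[k] A, Continuous β ∧
      β.comp α = AlgHom.id k A ∧ α.comp β = AlgHom.id k A :=
  close_to_id_is_isomorphism_general k A hA α hαc h0 h1
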